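/- Fix a positive integer n and a simple graph G on n vertices with Laplacian matrix L[G]. Let t0 < t1 be real numbers, C > 0, and ψ0 ∈ ℝ^n. Let H be a connected component of G, let k_G denote the number of connected components of G, and let λ_G denote the minimum nonzero eigenvalue of L[G] (assume G has at least one edge so that λ_G exists and λ_G > 0). If ψ : [t0, t1] → ℝ^n is continuous on [t0, t1], differentiable on (t0, t1), satisfies dψ/dt + C·L[G]·ψ = 0 on (t0, t1), and ψ(t0) = ψ0, then for all t with t0 ≤ t ≤ t1: max_{i ∈ H} ψ_i(t) − min_{j ∈ H} ψ_j(t) ≤ 2(n − k_G)·|ψ0|·e^{−C·λ_G·(t − t0)}, where ψ = (ψ_1, …, ψ_n) and i ∈ H means that i is a vertex of the component H. -/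

import Mathlib

/-!
Let `Q` be the orthogonal projection onto `(ker L)ᗮ`. Vectors in `ker L` are constant on connected
components, so the spread of `ψ(t)` over `H` equals that of `Q ψ(t)`, which is at most
`2 ‖Q ψ(t)‖`. As `L` is symmetric, `Q` commutes with `L`, so `Q ψ` solves the same equation inside
`(ker L)ᗮ`, where `⟪L x, x⟫ ≥ λ_G ‖x‖²` by the spectral theorem. Hence `‖Q ψ(s)‖² e^{2 C λ_G s}` is
nonincreasing, and `‖Q ψ(t)‖ ≤ ‖ψ₀‖ e^{-C λ_G (t - t₀)}`. An edge forces `k_G < n`, so the factor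
`n - k_G` is at least one.
-/

open scoped BigOperators

/-- The Euclidean norm on `ℝ^n`. -/
noncomputable def eNorm {n : ℕ} (v : Fin n → ℝ) : ℝ := Real.sqrt (∑ i, v i ^ 2)

open Set Real LinearMap Module.End
open scoped RealInnerProductSpace

section InnerProductSpace

variable {E : Type*} [NormedAddCommGroup E] [InnerProductSpace ℝ E]

theorem norm_le_mul_exp_of_inner_deriv_le {φ φ' : ℝ → E} {a b c t : ℝ}
    (hcont : ContinuousOn φ (Icc a b)) (hderiv : ∀ s ∈ Ioo a b, HasDerivAt φ (φ' s) s)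
    (hdiss : ∀ s ∈ Ioo a b, ⟪φ s, φ' s⟫ ≤ -c * ‖φ s‖ ^ 2) (ht : t ∈ Icc a b) :
    ‖φ t‖ ≤ ‖φ a‖ * exp (-c * (t - a)) := by
  set g : ℝ → ℝ := fun s => ‖φ s‖ ^ 2 * exp (2 * c * s)
  have hg : AntitoneOn g (Icc a b) := by
    refine antitoneOn_of_hasDerivWithinAt_nonpos (convex_Icc a b)
      (f' := fun s => 2 * ⟪φ s, φ' s⟫ * exp (2 * c * s) + ‖φ s‖ ^ 2 * (exp (2 * c * s) * (2 * c)))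
      ((hcont.norm.pow 2).mul (by fun_prop)) (fun s hs => ?_) (fun s hs => ?_)
    · rw [interior_Icc] at hs
      exact (((hderiv s hs).norm_sq).mul
        ((hasDerivAt_const_mul (2 * c)).exp)).hasDerivWithinAt
    · rw [interior_Icc] at hs
      have := hdiss s hs
      have : 0 < exp (2 * c * s) := exp_pos _
      nlinarith
  have hgt : g t ≤ g a := hg ⟨le_rfl, ht.1.trans ht.2⟩ ht ht.1
  have hexp : exp (-c * (t - a)) ^ 2 * exp (2 * c * t) = exp (2 * c * a) := by
    rw [← exp_nat_mul, ← exp_add]; ring_nf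
  have hsq : ‖φ t‖ ^ 2 ≤ (‖φ a‖ * exp (-c * (t - a))) ^ 2 := by
    refine le_of_mul_le_mul_right ?_ (exp_pos (2 * c * t))
    rw [mul_pow, mul_assoc (‖φ a‖ ^ 2), hexp]
    exact hgt
  exact (pow_le_pow_iff_left₀ (norm_nonneg _) (by positivity) two_ne_zero).mp hsq

theorem Submodule.sub_starProjection_orthogonal_mem (K : Submodule ℝ E)
    [K.HasOrthogonalProjection] (x : E) : x - Kᗮ.starProjection x ∈ K := by
  rw [starProjection_orthogonal_val, sub_sub_cancel]
  exact starProjection_apply_mem K x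

variable {T : E →ₗ[ℝ] E}

theorem apply_starProjection_orthogonal_ker [(ker T).HasOrthogonalProjection] (x : E) :
    T ((ker T)ᗮ.starProjection x) = T x := by
  rw [eq_comm, ← sub_eq_zero, ← map_sub]
  exact (ker T).sub_starProjection_orthogonal_mem x

namespace LinearMap.IsSymmetric

theorem apply_mem_orthogonal_ker (hT : T.IsSymmetric) (x : E) : T x ∈ (ker T)ᗮ :=
  hT.orthogonal_range ▸ (range T).le_orthogonal_orthogonal (mem_range_self T x)

theorem starProjection_orthogonal_ker_apply (hT : T.IsSymmetric)
    [(ker T).HasOrthogonalProjection] (x : E) :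
    (ker T)ᗮ.starProjection (T x) = T x :=
  Submodule.starProjection_eq_self_iff.mpr (hT.apply_mem_orthogonal_ker x)

theorem norm_starProjection_orthogonal_ker_le (hT : T.IsSymmetric)
    [(ker T).HasOrthogonalProjection] {C lam a b t : ℝ} (hC : 0 ≤ C)
    (hcoer : ∀ x ∈ (ker T)ᗮ, lam * ‖x‖ ^ 2 ≤ ⟪T x, x⟫) {ψ : ℝ → E}
    (hcont : ContinuousOn ψ (Icc a b)) (hode : ∀ s ∈ Ioo a b, HasDerivAt ψ (-(C • T (ψ s))) s)
    (ht : t ∈ Icc a b) :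
    ‖(ker T)ᗮ.starProjection (ψ t)‖ ≤ ‖ψ a‖ * exp (-C * lam * (t - a)) := by
  have hdecay := norm_le_mul_exp_of_inner_deriv_le (c := C * lam)
    (φ := fun s => (ker T)ᗮ.starProjection (ψ s))
    (φ' := fun s => -(C • T ((ker T)ᗮ.starProjection (ψ s))))
    ((ker T)ᗮ.starProjection.continuous.comp_continuousOn hcont) (fun s hs => ?_)
    (fun s hs => ?_) ht
  · rw [neg_mul C lam]
    exact hdecay.trans (mul_le_mul_of_nonneg_right
      (Submodule.norm_starProjection_apply_le _ _) (exp_pos _).le)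
  · have := (ker T)ᗮ.starProjection.hasFDerivAt.comp_hasDerivAt s (hode s hs)
    simpa only [Function.comp_def, map_neg, map_smul, hT.starProjection_orthogonal_ker_apply,
      apply_starProjection_orthogonal_ker] using this
  · have := hcoer _ (Submodule.starProjection_apply_mem _ (ψ s))
    rw [inner_neg_right, real_inner_smul_right, real_inner_comm]
    nlinarith

theorem mul_norm_sq_le_inner_of_mem_orthogonal_ker [FiniteDimensional ℝ E]
    (hT : T.IsSymmetric) {lam : ℝ} (hgap : ∀ μ, HasEigenvalue T μ → μ ≠ 0 → lam ≤ μ)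
    {x : E} (hx : x ∈ (ker T)ᗮ) : lam * ‖x‖ ^ 2 ≤ ⟪T x, x⟫ := by
  set b := hT.eigenvectorBasis rfl
  set μ := hT.eigenvalues rfl
  have hb : ∀ k, T (b k) = μ k • b k := hT.apply_eigenvectorBasis rfl
  have hTx : ⟪T x, x⟫ = ∑ k, μ k * ⟪b k, x⟫ ^ 2 := by
    rw [← b.sum_inner_mul_inner]
    refine Finset.sum_congr rfl fun k _ => ?_
    rw [hT, hb, real_inner_smul_right, real_inner_comm x]
    ring
  rw [hTx, ← b.sum_sq_norm_inner_right, Finset.mul_sum]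
  refine Finset.sum_le_sum fun k _ => ?_
  rw [Real.norm_eq_abs, sq_abs]
  by_cases hμ : μ k = 0
  · have hbk : b k ∈ ker T := by
      rw [mem_ker, hb, hμ, zero_smul]
    rw [(Submodule.mem_orthogonal _ x).mp hx _ hbk]
    simp
  · exact mul_le_mul_of_nonneg_right (hgap _ (hT.hasEigenvalue_eigenvalues rfl k) hμ)
      (sq_nonneg _)

end LinearMap.IsSymmetric

end InnerProductSpace

theorem Matrix.exists_mulVec_eq_smul_of_hasEigenvalue_toEuclideanLin {ι : Type*} [Fintype ι]
    [DecidableEq ι] {A : Matrix ι ι ℝ} {μ : ℝ} (hμ : HasEigenvalue (toEuclideanLin A) μ) :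
    ∃ v : ι → ℝ, v ≠ 0 ∧ A.mulVec v = μ • v := by
  obtain ⟨v, hv⟩ := hμ.exists_hasEigenvector
  refine ⟨v.ofLp, by simpa using hv.2, ?_⟩
  simpa only [Matrix.ofLp_toLpLin, Matrix.toLin'_apply, WithLp.ofLp_smul] using
    congrArg WithLp.ofLp (mem_eigenspace_iff.mp hv.1)

namespace SimpleGraph

variable {V : Type*}

theorem card_connectedComponent_lt_of_adj [Finite V] {G : SimpleGraph V} {x y : V}
    (h : G.Adj x y) : Nat.card G.ConnectedComponent < Nat.card V := by
  have := Fintype.ofFinite V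
  have := Fintype.ofFinite G.ConnectedComponent
  rw [Nat.card_eq_fintype_card, Nat.card_eq_fintype_card]
  exact Fintype.card_lt_of_surjective_not_injective G.connectedComponentMk Quot.mk_surjective
    fun hinj => h.ne (hinj (ConnectedComponent.connectedComponentMk_eq_of_adj h))

variable [Fintype V] [DecidableEq V] (G : SimpleGraph V) [DecidableRel G.Adj]

theorem isSymmetric_toEuclideanLin_lapMatrix :
    (Matrix.toEuclideanLin (G.lapMatrix ℝ)).IsSymmetric :=
  Matrix.isSymmetric_toEuclideanLin_iff.mpr (G.isHermitian_lapMatrix ℝ)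

theorem apply_eq_of_mem_ker_toEuclideanLin_lapMatrix {x : EuclideanSpace ℝ V}
    (hx : x ∈ ker (Matrix.toEuclideanLin (G.lapMatrix ℝ))) {i j : V} (hij : G.Reachable i j) :
    x i = x j := by
  have hx' := congrArg WithLp.ofLp (mem_ker.mp hx)
  rw [Matrix.ofLp_toLpLin, Matrix.toLin'_apply] at hx'
  exact G.lapMatrix_mulVec_eq_zero_iff_forall_reachable.mp hx' i j hij

theorem sub_eq_sub_starProjection_orthogonal_ker_lapMatrix (x : EuclideanSpace ℝ V) {i j : V}
    (hij : G.Reachable i j) :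
    x i - x j = (ker (Matrix.toEuclideanLin (G.lapMatrix ℝ)))ᗮ.starProjection x i -
      (ker (Matrix.toEuclideanLin (G.lapMatrix ℝ)))ᗮ.starProjection x j := by
  have := G.apply_eq_of_mem_ker_toEuclideanLin_lapMatrix
    ((ker _).sub_starProjection_orthogonal_mem x) hij
  simp only [PiLp.sub_apply] at this
  linarith

theorem norm_starProjection_orthogonal_ker_lapMatrix_le {C lam a b t : ℝ} (hC : 0 ≤ C)
    (hgap : ∀ μ : ℝ, (∃ v : V → ℝ, v ≠ 0 ∧ (G.lapMatrix ℝ).mulVec v = μ • v) → μ ≠ 0 → lam ≤ μ)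
    {ψ : ℝ → V → ℝ} (hcont : ContinuousOn ψ (Icc a b))
    (hode : ∀ s ∈ Ioo a b, HasDerivAt ψ (-(C • (G.lapMatrix ℝ).mulVec (ψ s))) s)
    (ht : t ∈ Icc a b) :
    ‖(ker (Matrix.toEuclideanLin (G.lapMatrix ℝ)))ᗮ.starProjection (WithLp.toLp 2 (ψ t))‖ ≤
      ‖WithLp.toLp 2 (ψ a)‖ * exp (-C * lam * (t - a)) := by
  have hT := G.isSymmetric_toEuclideanLin_lapMatrix
  have hcoer : ∀ x ∈ (ker (Matrix.toEuclideanLin (G.lapMatrix ℝ)))ᗮ,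
      lam * ‖x‖ ^ 2 ≤ ⟪Matrix.toEuclideanLin (G.lapMatrix ℝ) x, x⟫ :=
    fun x hx => hT.mul_norm_sq_le_inner_of_mem_orthogonal_ker
      (fun μ hμ => hgap μ (Matrix.exists_mulVec_eq_smul_of_hasEigenvalue_toEuclideanLin hμ)) hx
  have hcont' : ContinuousOn (fun s => WithLp.toLp 2 (ψ s)) (Icc a b) :=
    (PiLp.continuous_toLp 2 _).comp_continuousOn hcont
  have hode' : ∀ s ∈ Ioo a b, HasDerivAt (fun s => WithLp.toLp 2 (ψ s))
      (-(C • Matrix.toEuclideanLin (G.lapMatrix ℝ) (WithLp.toLp 2 (ψ s)))) s := fun s hs =>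
    (PiLp.continuousLinearEquiv 2 ℝ fun _ : V => ℝ).symm.hasFDerivAt.comp_hasDerivAt s (hode s hs)
  exact (hT.norm_starProjection_orthogonal_ker_le hC hcoer hcont' hode' ht :)

end SimpleGraph

theorem EuclideanSpace.sub_le_two_mul_norm {ι : Type*} [Fintype ι] (x : EuclideanSpace ℝ ι)
    (i j : ι) : x i - x j ≤ 2 * ‖x‖ := by
  have hi := PiLp.norm_apply_le x i
  have hj := PiLp.norm_apply_le x j
  rw [Real.norm_eq_abs] at hi hj
  linarith [le_abs_self (x i), neg_abs_le (x j)]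

theorem eNorm_eq_norm_toLp {n : ℕ} (v : Fin n → ℝ) : eNorm v = ‖WithLp.toLp 2 v‖ := by
  simp [eNorm, EuclideanSpace.norm_eq]

theorem diameter_bound_general
    (n : ℕ) (G : SimpleGraph (Fin n)) [DecidableRel G.Adj]
    (hedge : ∃ x y : Fin n, G.Adj x y)
    (t0 t1 : ℝ) (C : ℝ) (hC : 0 < C) (ψ0 : Fin n → ℝ)
    (H : G.ConnectedComponent)
    (kG : ℕ) (hk : kG = Nat.card G.ConnectedComponent)
    (lamG : ℝ)
    (hlammin : ∀ μ : ℝ, (∃ v : Fin n → ℝ, v ≠ 0 ∧ (G.lapMatrix ℝ).mulVec v = μ • v) →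
      μ ≠ 0 → lamG ≤ μ)
    (ψ : ℝ → (Fin n → ℝ))
    (hcont : ContinuousOn ψ (Set.Icc t0 t1))
    (hode : ∀ t ∈ Set.Ioo t0 t1,
      HasDerivAt ψ (-(C • (G.lapMatrix ℝ).mulVec (ψ t))) t)
    (hinit : ψ t0 = ψ0) :
    ∀ t ∈ Set.Icc t0 t1, ∀ i j : Fin n,
      G.connectedComponentMk i = H → G.connectedComponentMk j = H →
      ψ t i - ψ t j ≤ 2 * ((n : ℝ) - (kG : ℝ)) * eNorm ψ0 *
        Real.exp (-C * lamG * (t - t0)) := by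
  intro t ht i j hi hj
  obtain ⟨x, y, hxy⟩ := hedge
  set φ := (ker (Matrix.toEuclideanLin (G.lapMatrix ℝ)))ᗮ.starProjection (WithLp.toLp 2 (ψ t))
  have hdecay : ‖φ‖ ≤ eNorm ψ0 * exp (-C * lamG * (t - t0)) := by
    rw [eNorm_eq_norm_toLp, ← hinit]
    exact G.norm_starProjection_orthogonal_ker_lapMatrix_le hC.le hlammin hcont hode ht
  have hspread : ψ t i - ψ t j ≤ 2 * ‖φ‖ := by
    have := G.sub_eq_sub_starProjection_orthogonal_ker_lapMatrix (WithLp.toLp 2 (ψ t))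
      (SimpleGraph.ConnectedComponent.exact (hi.trans hj.symm))
    rw [PiLp.toLp_apply, PiLp.toLp_apply] at this
    exact this ▸ EuclideanSpace.sub_le_two_mul_norm φ i j
  have hcount : 1 ≤ (n : ℝ) - kG := by
    have := G.card_connectedComponent_lt_of_adj hxy
    rw [Nat.card_fin, ← hk] at this
    have : (kG : ℝ) + 1 ≤ n := by exact_mod_cast this
    linarith
  calc ψ t i - ψ t j ≤ 2 * (eNorm ψ0 * exp (-C * lamG * (t - t0))) := by linarith
    _ ≤ ((n : ℝ) - kG) * (2 * (eNorm ψ0 * exp (-C * lamG * (t - t0)))) :=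
        le_mul_of_one_le_left (by linarith [norm_nonneg φ]) hcount
    _ = 2 * ((n : ℝ) - kG) * eNorm ψ0 * exp (-C * lamG * (t - t0)) := by ring

/-- Bound on the spread `max_{i ∈ H} ψ_i(t) − min_{j ∈ H} ψ_j(t)` over a
connected component `H` of `G` for a solution of the diffusion equation
`dψ/dt + C·L[G]·ψ = 0`.  Here `kG` is the number of connected components of `G` and `lamG`
the minimum nonzero eigenvalue of `L[G]` (which exists and is positive since `G` has at
least one edge).  The conclusion `∀ i j ∈ H, ψ_i(t) − ψ_j(t) ≤ bound` is exactly
`max_{i ∈ H} ψ_i(t) − min_{j ∈ H} ψ_j(t) ≤ bound`. -/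
theorem diameter_bound
    (n : ℕ) (hn : 0 < n) (G : SimpleGraph (Fin n)) [DecidableRel G.Adj]
    (hedge : ∃ x y : Fin n, G.Adj x y)
    (t0 t1 : ℝ) (ht : t0 < t1) (C : ℝ) (hC : 0 < C) (ψ0 : Fin n → ℝ)
    (H : G.ConnectedComponent)
    (kG : ℕ) (hk : kG = Nat.card G.ConnectedComponent)
    (lamG : ℝ) (hlampos : 0 < lamG)
    (hlameig : ∃ v : Fin n → ℝ, v ≠ 0 ∧ (G.lapMatrix ℝ).mulVec v = lamG • v)
    (hlammin : ∀ μ : ℝ, (∃ v : Fin n → ℝ, v ≠ 0 ∧ (G.lapMatrix ℝ).mulVec v = μ • v) →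
      μ ≠ 0 → lamG ≤ μ)
    (ψ : ℝ → (Fin n → ℝ))
    (hcont : ContinuousOn ψ (Set.Icc t0 t1))
    (hode : ∀ t ∈ Set.Ioo t0 t1,
      HasDerivAt ψ (-(C • (G.lapMatrix ℝ).mulVec (ψ t))) t)
    (hinit : ψ t0 = ψ0) :
    ∀ t ∈ Set.Icc t0 t1, ∀ i j : Fin n,
      G.connectedComponentMk i = H → G.connectedComponentMk j = H →
      ψ t i - ψ t j ≤ 2 * ((n : ℝ) - (kG : ℝ)) * eNorm ψ0 *
        Real.exp (-C * lamG * (t - t0)) :=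
  diameter_bound_general n G hedge t0 t1 C hC ψ0 H kG hk lamG hlammin ψ hcont hode hinit
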